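/- arXiv:2112.08100 — 6 statements merged into one kernel-verified Lean document; each statement's English description precedes it below -/
import Mathlib

section
/- For integers a, b ≥ 0 and c ≥ 0, the q-Vandermonde identity holds: [a+b choose c]_q = Σ_{j=0}^{c} q^{j(b-c+j)} [a choose j]_q [b choose c-j]_q. -/
open scoped Classical

noncomputable section

namespace TensorCodes

/-- The Gaussian (`q`-binomial) coefficient for integer arguments, following the
definition in the paper. -/
def qbin (q : ℚ) (a b : ℤ) : ℚ :=
  if b < 0 then 0
  else if b = 0 then 1
  else if a < 0 then
    (-1) ^ b.toNat * q ^ (a * b - b * (b - 1) / 2) *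
      ∏ i ∈ Finset.range b.toNat, (q ^ (-a + b - 1 - (i : ℤ)) - 1) / (q ^ ((i : ℤ) + 1) - 1)
  else if a < b then 0
  else ∏ i ∈ Finset.range b.toNat, (q ^ (a - (i : ℤ)) - 1) / (q ^ ((i : ℤ) + 1) - 1)


def G (q : ℚ) (a b : ℕ) : ℚ :=
  if b ≤ a then ∏ i ∈ Finset.range b, (q ^ (a - i) - 1) / (q ^ (i + 1) - 1) else 0

lemma G_zero (q : ℚ) (a : ℕ) : G q a 0 = 1 := by simp [G]

lemma G_of_lt (q : ℚ) {a b : ℕ} (h : a < b) : G q a b = 0 := by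
  simp [G, Nat.not_le.mpr h]

lemma G_succ_succ (q : ℚ) {a b : ℕ} (h : b ≤ a) :
    G q (a + 1) (b + 1) = G q a b * ((q ^ (a + 1) - 1) / (q ^ (b + 1) - 1)) := by
  rw [G, if_pos (by omega : b + 1 ≤ a + 1), G, if_pos h]
  rw [Finset.prod_div_distrib, Finset.prod_div_distrib, div_mul_div_comm,
    Finset.prod_range_succ' (fun i => q ^ (a + 1 - i) - 1) b,
    Finset.prod_range_succ (fun i => q ^ (i + 1) - 1) b]
  simp [Nat.succ_sub_succ]

lemma G_step (q : ℚ) {a b : ℕ} (h : b + 1 ≤ a) :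
    G q a (b + 1) = G q a b * ((q ^ (a - b) - 1) / (q ^ (b + 1) - 1)) := by
  rw [G, if_pos h, G, if_pos (by omega : b ≤ a), Finset.prod_range_succ]

lemma G_diag (q : ℚ) (hq : 1 < q) (a : ℕ) : G q a a = 1 := by
  induction a with
  | zero => simp [G]
  | succ a ih =>
    rw [G_succ_succ q le_rfl, ih, one_mul, div_self]
    have : 1 < q ^ (a + 1) := one_lt_pow₀ hq (by omega)
    linarith

lemma G_pascal (q : ℚ) (hq : 1 < q) (a b : ℕ) :
    G q (a + 1) (b + 1) = G q a (b + 1) + q ^ (a - b) * G q a b := by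
  rcases lt_trichotomy a b with hab | hab | hab
  · rw [G_of_lt q (by omega), G_of_lt q (by omega), G_of_lt q hab]; ring
  · subst hab
    rw [G_diag q hq, G_of_lt q (by omega), G_diag q hq, Nat.sub_self]; ring
  · have hd : q ^ (b + 1) - 1 ≠ 0 := by
      have : 1 < q ^ (b + 1) := one_lt_pow₀ hq (by omega)
      linarith
    rw [G_succ_succ q (by omega : b ≤ a), G_step q hab]
    have key : (q ^ (a + 1) - 1) / (q ^ (b + 1) - 1)
        = (q ^ (a - b) - 1) / (q ^ (b + 1) - 1) + q ^ (a - b) := by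
      field_simp
      rw [show a + 1 = (a - b) + (b + 1) by omega, pow_add]
      ring
    rw [key]; ring


lemma term_eq (q : ℚ) (hq : 1 < q) (a b k j : ℕ) (hj : j ≤ k) :
    q ^ (((j : ℤ) + 1) * ((b : ℤ) - k + j)) * (q ^ (a - j) * G q a j) * G q b (k - j)
      = q ^ (a + b - k) * (q ^ ((j : ℤ) * ((b : ℤ) - k + j)) * G q a j * G q b (k - j)) := by
  have hq0 : q ≠ 0 := by linarith
  rcases lt_or_ge a j with h | h
  · rw [G_of_lt q h]; ring
  rcases lt_or_ge b (k - j) with h2 | h2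
  · rw [G_of_lt q h2]; ring
  have e1 : q ^ (a - j) = q ^ ((a : ℤ) - j) := by
    rw [show (a : ℤ) - j = ((a - j : ℕ) : ℤ) by omega, zpow_natCast]
  have e2 : q ^ (a + b - k) = q ^ ((a : ℤ) + b - k) := by
    rw [show (a : ℤ) + b - k = ((a + b - k : ℕ) : ℤ) by omega, zpow_natCast]
  rw [e1, e2]
  have key : q ^ (((j:ℤ)+1) * ((b:ℤ) - k + j)) * q ^ ((a:ℤ) - j)
      = q ^ ((a:ℤ) + b - k) * q ^ ((j:ℤ) * ((b:ℤ) - k + j)) := by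
    rw [← zpow_add₀ hq0, ← zpow_add₀ hq0,
      show ((j:ℤ)+1) * ((b:ℤ) - k + j) + ((a:ℤ) - j)
        = (a:ℤ) + b - k + (j:ℤ) * ((b:ℤ) - k + j) by ring]
  linear_combination G q a j * G q b (k - j) * key


lemma vander (q : ℚ) (hq : 1 < q) (b : ℕ) : ∀ a c : ℕ,
    G q (a + b) c = ∑ j ∈ Finset.range (c + 1),
      q ^ ((j : ℤ) * ((b : ℤ) - (c : ℤ) + (j : ℤ))) * G q a j * G q b (c - j) := by
  intro a
  induction a with
  | zero =>
    intro c
    rw [Finset.sum_eq_single 0]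
    · simp [G_zero]
    · intro j hj hj0
      rw [G_of_lt q (Nat.pos_of_ne_zero hj0)]
      ring
    · intro h; exact absurd (Finset.mem_range.mpr (by omega)) h
  | succ a ih =>
    intro c
    cases c with
    | zero => simp [G_zero]
    | succ k =>
      have hL : a + 1 + b = a + b + 1 := by ring
      rw [hL, G_pascal q hq, ih, ih]
      have key : ∀ j ∈ Finset.range (k + 1),
          q ^ (((j+1 : ℕ) : ℤ) * ((b:ℤ) - ((k+1 : ℕ) : ℤ) + ((j+1 : ℕ) : ℤ))) * G q (a+1) (j+1)
              * G q b (k+1-(j+1))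
            = q ^ (((j+1 : ℕ) : ℤ) * ((b:ℤ) - ((k+1 : ℕ) : ℤ) + ((j+1 : ℕ) : ℤ))) * G q a (j+1)
                * G q b (k+1-(j+1))
              + q ^ (a+b-k) * (q ^ ((j:ℤ) * ((b:ℤ) - (k:ℤ) + (j:ℤ))) * G q a j * G q b (k-j)) := by
        intro j hj
        have hjk : j ≤ k := by have := Finset.mem_range.mp hj; omega
        have h1 : k + 1 - (j + 1) = k - j := by omega
        have h2 : ((j+1 : ℕ) : ℤ) * ((b:ℤ) - ((k+1 : ℕ) : ℤ) + ((j+1 : ℕ) : ℤ))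
            = ((j:ℤ) + 1) * ((b:ℤ) - (k:ℤ) + (j:ℤ)) := by push_cast; ring
        rw [G_pascal q hq a j, h1, h2]
        linear_combination term_eq q hq a b k j hjk
      rw [Finset.sum_range_succ'
        (fun j => q ^ ((j:ℤ) * ((b:ℤ) - ((k+1:ℕ):ℤ) + (j:ℤ))) * G q (a+1) j * G q b (k+1-j)) (k+1),
        Finset.sum_congr rfl key, Finset.sum_add_distrib, ← Finset.mul_sum,
        Finset.sum_range_succ'
        (fun j => q ^ ((j:ℤ) * ((b:ℤ) - ((k+1:ℕ):ℤ) + (j:ℤ))) * G q a j * G q b (k+1-j)) (k+1)]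
      simp only [G_zero]
      ring


lemma qbin_eq_G (q : ℚ) (a b : ℤ) (ha : 0 ≤ a) (hb : 0 ≤ b) :
    qbin q a b = G q a.toNat b.toNat := by
  rw [qbin, if_neg (by omega : ¬ b < 0)]
  by_cases hb0 : b = 0
  · subst hb0; simp [G_zero]
  rw [if_neg hb0, if_neg (by omega : ¬ a < 0)]
  by_cases hab : a < b
  · rw [if_pos hab, G_of_lt q (by omega : a.toNat < b.toNat)]
  · rw [if_neg hab, G, if_pos (by omega : b.toNat ≤ a.toNat)]
    refine Finset.prod_congr rfl fun i hi => ?_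
    have hi' : i < b.toNat := Finset.mem_range.mp hi
    rw [show (a : ℤ) - i = ((a.toNat - i : ℕ) : ℤ) from by omega,
      show ((i : ℤ) + 1) = ((i + 1 : ℕ) : ℤ) from by push_cast; ring,
      zpow_natCast, zpow_natCast]

/-- the `q`-Vandermonde identity
`[a+b, c]_q = ∑_{j=0}^{c} q^{j(b-c+j)} [a, j]_q [b, c-j]_q` for `a, b, c ≥ 0`. -/
theorem qbin_add (p m : ℕ) (hp : p.Prime) (hm : 0 < m) (a b c : ℤ)
    (ha : 0 ≤ a) (hb : 0 ≤ b) (hc : 0 ≤ c) :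
    qbin ((p : ℚ) ^ m) (a + b) c
      = ∑ j ∈ Finset.range (c.toNat + 1),
          ((p : ℚ) ^ m) ^ ((j : ℤ) * (b - c + (j : ℤ)))
            * qbin ((p : ℚ) ^ m) a (j : ℤ) * qbin ((p : ℚ) ^ m) b (c - (j : ℤ)) := by
  set q : ℚ := (p : ℚ) ^ m with hqdef
  have hq : 1 < q := one_lt_pow₀ (by exact_mod_cast hp.one_lt) (by omega)
  rw [qbin_eq_G q (a + b) c (by omega) hc,
    show (a + b).toNat = a.toNat + b.toNat from by omega,
    vander q hq b.toNat a.toNat c.toNat]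
  refine Finset.sum_congr rfl fun j hj => ?_
  have hj' : j < c.toNat + 1 := Finset.mem_range.mp hj
  rw [qbin_eq_G q a (j : ℤ) ha (by positivity),
    qbin_eq_G q b (c - (j : ℤ)) hb (by omega),
    show ((j : ℤ)).toNat = j from by omega,
    show (c - (j : ℤ)).toNat = c.toNat - j from by omega,
    show (b : ℤ) - c = ((b.toNat : ℕ) : ℤ) - ((c.toNat : ℕ) : ℤ) from by omega]

end TensorCodes
end
end

section
/- For a k-dimensional tensor code C ≤ F with minimum tensor-rank distance d and tensor rank trk(C), the generalized tensor weights with respect to perfect spaces satisfy t_j^ps(C) ≤ trk(C) + k − j and t_j^ps(C) ≥ d + j − 1 for all j ∈ {1,...,k}. -/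
open scoped Classical

noncomputable section

namespace TensorCodes

variable {K : Type} [Field K] [Fintype K] {r : ℕ} {n : Fin r → ℕ}

/-- A simple (rank-one) tensor `u⁽¹⁾ ⊗ ⋯ ⊗ u⁽ʳ⁾`, in the identification of
`𝔽_q^{n_1} ⊗ ⋯ ⊗ 𝔽_q^{n_r}` with the space of `r`-dimensional arrays. -/
def simpleTensor (u : ∀ i, Fin (n i) → K) : ((i : Fin r) → Fin (n i)) → K :=
  fun J => ∏ i, u i (J i)

/-- The tensor product `U₁ ⊗ ⋯ ⊗ U_r` of subspaces `U i ≤ 𝔽_q^{n_i}`, identified with the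
subspace of the array space spanned by the corresponding simple tensors. -/
def tp (U : ∀ i, Submodule K (Fin (n i) → K)) :
    Submodule K (((i : Fin r) → Fin (n i)) → K) :=
  Submodule.span K {X | ∃ u : ∀ i, Fin (n i) → K, (∀ i, u i ∈ U i) ∧ X = simpleTensor u}

/-- The dual (orthogonal complement) of a tensor code with respect to the nondegenerate
bilinear form `X * Y = ∑_J X_J Y_J`. -/
def tdual (C : Submodule K (((i : Fin r) → Fin (n i)) → K)) :
    Submodule K (((i : Fin r) → Fin (n i)) → K) where
  carrier := {X | ∀ Y ∈ C, ∑ J, X J * Y J = 0}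
  add_mem' := by
    intro a b ha hb Y hY
    have h : ∑ J, (a J * Y J + b J * Y J) = 0 := by
      rw [Finset.sum_add_distrib, ha Y hY, hb Y hY, add_zero]
    simpa [add_mul] using h
  zero_mem' := by intro Y hY; simp
  smul_mem' := by
    intro c a ha Y hY
    have h := ha Y hY
    simp only [Pi.smul_apply, smul_eq_mul, mul_assoc]
    rw [← Finset.mul_sum, h, mul_zero]

/-- The orthogonal complement of a subspace of `𝔽_q^m` with respect to the dot product. -/
def vdual {m : ℕ} (U : Submodule K (Fin m → K)) : Submodule K (Fin m → K) where
  carrier := {x | ∀ y ∈ U, ∑ t, x t * y t = 0}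
  add_mem' := by
    intro a b ha hb y hy
    have h : ∑ t, (a t * y t + b t * y t) = 0 := by
      rw [Finset.sum_add_distrib, ha y hy, hb y hy, add_zero]
    simpa [add_mul] using h
  zero_mem' := by intro y hy; simp
  smul_mem' := by
    intro c a ha y hy
    have h := ha y hy
    simp only [Pi.smul_apply, smul_eq_mul, mul_assoc]
    rw [← Finset.mul_sum, h, mul_zero]

/-- A subspace is perfect if it is spanned by the simple (rank-one) tensors it contains. -/
def IsPerfect (A : Submodule K (((i : Fin r) → Fin (n i)) → K)) : Prop :=
  A = Submodule.span K ((A : Set (((i : Fin r) → Fin (n i)) → K)) ∩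
    {X | ∃ u : ∀ i, Fin (n i) → K, X = simpleTensor u})

/-- The tensor rank of an `r`-tensor: the least number of simple tensors summing to it. -/
def trank (X : ((i : Fin r) → Fin (n i)) → K) : ℕ :=
  sInf {R | ∃ u : Fin R → ∀ i, Fin (n i) → K, X = ∑ s, simpleTensor (u s)}

/-- The minimum tensor-rank distance of a (nonzero) tensor code. -/
def minDist (C : Submodule K (((i : Fin r) → Fin (n i)) → K)) : ℕ :=
  sInf {d | ∃ X ∈ C, X ≠ (0 : ((i : Fin r) → Fin (n i)) → K) ∧ trank X = d}

/-- The tensor rank of a tensor code: the minimum dimension of a perfect space containing it. -/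
def trk (C : Submodule K (((i : Fin r) → Fin (n i)) → K)) : ℕ :=
  sInf {a | ∃ A : Submodule K (((i : Fin r) → Fin (n i)) → K),
    IsPerfect A ∧ C ≤ A ∧ Module.finrank K ↥A = a}

/-- The `j`-th generalized tensor weight of `C` with respect to a collection `𝒜` of
anticodes:  the minimum dimension of a member of `𝒜` meeting `C` in dimension at least `j`. -/
def genW {V : Type} [AddCommGroup V] [Module K V] (𝒜 : Set (Submodule K V))
    (C : Submodule K V) (j : ℕ) : ℕ :=
  sInf {a | ∃ A ∈ 𝒜, Module.finrank K ↥A = a ∧ j ≤ Module.finrank K ↥(C ⊓ A)}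


end TensorCodes

/-!
A perfect space `A` has a basis of simple tensors, and a combination of `s` simple tensors has
tensor rank at most `s`. So the span of `d - 1` of these basis tensors is a subspace of `A`
meeting `C` trivially, which gives `dim (C ∩ A) + d - 1 ≤ dim A`. For the upper bound, a perfect
space of dimension `trk C` containing `C` already meets `C` in dimension `k ≥ j`.
-/

namespace TensorCodes

section

variable {K : Type} [Field K] {r : ℕ} {n : Fin r → ℕ}

abbrev TensorSpace (K : Type) (n : Fin r → ℕ) : Type := ((i : Fin r) → Fin (n i)) → K

lemma single_one_eq_simpleTensor (J : (i : Fin r) → Fin (n i)) :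
    (Pi.single J 1 : TensorSpace K n) =
      simpleTensor (n := n) fun i => Pi.single (J i) (1 : K) := by
  funext J'
  simp [simpleTensor, Pi.single_apply, Fintype.prod_boole, funext_iff]

lemma span_simpleTensor_eq_top :
    Submodule.span K {X : TensorSpace K n | ∃ u, X = simpleTensor u} = ⊤ :=
  eq_top_iff.2 <| (Pi.basisFun K _).span_eq.ge.trans <| Submodule.span_mono <|
    Set.range_subset_iff.2 fun J => ⟨_, by rw [Pi.basisFun_apply, single_one_eq_simpleTensor]⟩

lemma isPerfect_top : IsPerfect (⊤ : Submodule K (TensorSpace K n)) := by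
  rw [IsPerfect, Submodule.top_coe, Set.univ_inter, span_simpleTensor_eq_top]

lemma smul_simpleTensor [Nonempty (Fin r)] (c : K) (u : ∀ i, Fin (n i) → K) :
    ∃ v, c • simpleTensor u = simpleTensor v := by
  obtain ⟨i₀⟩ := ‹Nonempty (Fin r)›
  refine ⟨Function.update u i₀ (c • u i₀), funext fun J => ?_⟩
  simp only [simpleTensor, Pi.smul_apply, smul_eq_mul]
  rw [Finset.prod_congr rfl fun i _ => Function.apply_update (fun i w => w (J i)) u i₀ _ i,
    Finset.prod_update_of_mem (Finset.mem_univ i₀),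
    ← Finset.mul_prod_erase _ _ (Finset.mem_univ i₀)]
  simp [mul_assoc, Finset.sdiff_singleton_eq_erase]

lemma trank_sum_le {ι : Type*} [Fintype ι] (u : ι → ∀ i, Fin (n i) → K) :
    trank (∑ s, simpleTensor (u s)) ≤ Fintype.card ι :=
  Nat.sInf_le ⟨u ∘ (Fintype.equivFin ι).symm, (Equiv.sum_comp _ _).symm⟩

lemma trank_simpleTensor_le_one (u : ∀ i, Fin (n i) → K) : trank (simpleTensor u) ≤ 1 := by
  simpa using trank_sum_le fun _ : Unit => u

lemma trank_le_card_of_mem_span [Nonempty (Fin r)] {s : Finset (TensorSpace K n)}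
    (hs : ∀ T ∈ s, ∃ u, T = simpleTensor u) {X : TensorSpace K n}
    (hX : X ∈ Submodule.span K (s : Set (TensorSpace K n))) :
    trank X ≤ s.card := by
  obtain ⟨f, -, rfl⟩ := Submodule.mem_span_finset.1 hX
  have hsimple : ∀ T : s, ∃ v, f T • (T : TensorSpace K n) = simpleTensor v := by
    rintro ⟨T, hT⟩
    obtain ⟨u, rfl⟩ := hs T hT
    exact smul_simpleTensor _ u
  choose v hv using hsimple
  rw [← Finset.sum_coe_sort, Finset.sum_congr rfl fun T _ => hv T, ← Fintype.card_coe s]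
  exact trank_sum_le v

lemma minDist_le_trank {C : Submodule K (TensorSpace K n)} {X : TensorSpace K n} (hX : X ∈ C)
    (hX0 : X ≠ 0) : minDist C ≤ trank X :=
  Nat.sInf_le ⟨X, hX, hX0, rfl⟩

lemma minDist_le_one_of_isEmpty [IsEmpty (Fin r)] {C : Submodule K (TensorSpace K n)}
    (hC : C ≠ ⊥) : minDist C ≤ 1 := by
  obtain ⟨X, hX, hX0⟩ := (Submodule.ne_bot_iff C).1 hC
  have hXJ : X default ≠ 0 := fun h => hX0 (funext fun J => by rwa [Subsingleton.elim J default])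
  have hsimple : (X default)⁻¹ • X = simpleTensor isEmptyElim := by
    funext J
    simp [simpleTensor, Subsingleton.elim J default, hXJ]
  calc minDist C ≤ trank ((X default)⁻¹ • X) :=
        minDist_le_trank (C.smul_mem _ hX) (smul_ne_zero (inv_ne_zero hXJ) hX0)
    _ ≤ 1 := hsimple ▸ trank_simpleTensor_le_one _

lemma IsPerfect.exists_finset_basis {A : Submodule K (TensorSpace K n)} (hA : IsPerfect A) :
    ∃ b : Finset (TensorSpace K n), (∀ T ∈ b, ∃ u, T = simpleTensor u) ∧
      LinearIndepOn K id (b : Set (TensorSpace K n)) ∧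
      Submodule.span K (b : Set (TensorSpace K n)) = A := by
  obtain ⟨b, hb_sub, hb_span, hb_li⟩ :=
    exists_linearIndependent K ((A : Set (TensorSpace K n)) ∩ {X | ∃ u, X = simpleTensor u})
  have hb : b.Finite := hb_li.setFinite
  refine ⟨hb.toFinset, fun T hT => (hb_sub (hb.mem_toFinset.1 hT)).2, ?_, ?_⟩
  · rwa [hb.coe_toFinset]
  · rw [hb.coe_toFinset, hb_span, ← hA]

lemma disjoint_span_of_card_lt_minDist [Nonempty (Fin r)] (C : Submodule K (TensorSpace K n))
    {s : Finset (TensorSpace K n)}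
    (hs : ∀ T ∈ s, ∃ u, T = simpleTensor u) (hcard : s.card < minDist C) :
    Disjoint C (Submodule.span K (s : Set (TensorSpace K n))) := by
  rw [Submodule.disjoint_def]
  intro X hXC hXs
  by_contra hX0
  exact hcard.not_ge ((minDist_le_trank hXC hX0).trans (trank_le_card_of_mem_span hs hXs))

lemma finrank_inf_add_minDist_sub_one_le_of_nonempty [Nonempty (Fin r)]
    {C A : Submodule K (TensorSpace K n)} (hA : IsPerfect A) (hCA : C ⊓ A ≠ ⊥) :
    Module.finrank K ↥(C ⊓ A) + (minDist C - 1) ≤ Module.finrank K ↥A := by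
  obtain ⟨b, hb_simple, hb_li, hb_span⟩ := hA.exists_finset_basis
  obtain ⟨X, hX, hX0⟩ := (Submodule.ne_bot_iff _).1 hCA
  have hd_le : minDist C ≤ b.card :=
    (minDist_le_trank hX.1 hX0).trans (trank_le_card_of_mem_span hb_simple (hb_span ▸ hX.2))
  obtain ⟨t, htb, htcard⟩ :=
    Finset.exists_subset_card_eq (show minDist C - 1 ≤ b.card by omega)
  have hinf_le : Module.finrank K ↥(C ⊓ A) ≤ Module.finrank K ↥A :=
    Submodule.finrank_mono inf_le_right
  by_cases hd : minDist C = 0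
  · omega
  have hdisj : Disjoint (C ⊓ A) (Submodule.span K (t : Set (TensorSpace K n))) :=
    (disjoint_span_of_card_lt_minDist C (fun T hT => hb_simple T (htb hT)) (by omega)).mono_left
      inf_le_left
  have ht_le : Submodule.span K (t : Set (TensorSpace K n)) ≤ A :=
    hb_span ▸ Submodule.span_mono (Finset.coe_subset.2 htb)
  calc Module.finrank K ↥(C ⊓ A) + (minDist C - 1)
      = Module.finrank K ↥((C ⊓ A) ⊔ Submodule.span K (t : Set (TensorSpace K n))) := by
        rw [← htcard, ← finrank_span_finset_eq_card (hb_li.mono (Finset.coe_subset.2 htb)),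
          ← Submodule.finrank_sup_add_finrank_inf_eq, hdisj.eq_bot, finrank_bot, add_zero]
    _ ≤ Module.finrank K ↥A := Submodule.finrank_mono (sup_le inf_le_right ht_le)

lemma finrank_inf_add_minDist_sub_one_le {C A : Submodule K (TensorSpace K n)}
    (hA : IsPerfect A) (hCA : C ⊓ A ≠ ⊥) :
    Module.finrank K ↥(C ⊓ A) + (minDist C - 1) ≤ Module.finrank K ↥A := by
  rcases isEmpty_or_nonempty (Fin r) with _ | _
  -- For `r = 0` the only simple tensor is the constant `1`, so multiples of simple tensors
  -- need not be simple; here `minDist C ≤ 1` makes the bound trivial instead.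
  · have hd := minDist_le_one_of_isEmpty (ne_bot_of_le_ne_bot hCA inf_le_left)
    have hinf_le : Module.finrank K ↥(C ⊓ A) ≤ Module.finrank K ↥A :=
      Submodule.finrank_mono inf_le_right
    omega
  · exact finrank_inf_add_minDist_sub_one_le_of_nonempty hA hCA

lemma le_genW {V : Type} [AddCommGroup V] [Module K V] {𝒜 : Set (Submodule K V)}
    {C : Submodule K V} {j m : ℕ} (hne : ∃ A ∈ 𝒜, j ≤ Module.finrank K ↥(C ⊓ A))
    (h : ∀ A ∈ 𝒜, j ≤ Module.finrank K ↥(C ⊓ A) → m ≤ Module.finrank K ↥A) :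
    m ≤ genW 𝒜 C j := by
  obtain ⟨A, hA, hjA⟩ := hne
  refine le_csInf ⟨_, A, hA, rfl, hjA⟩ ?_
  rintro _ ⟨A, hA, rfl, hjA⟩
  exact h A hA hjA

lemma genW_perfect_le_trk {C : Submodule K (TensorSpace K n)} {j : ℕ}
    (hjk : j ≤ Module.finrank K ↥C) : genW {A | IsPerfect A} C j ≤ trk C := by
  obtain ⟨A, hA, hCA, hrank⟩ : trk C ∈
      {a | ∃ A : Submodule K (TensorSpace K n),
        IsPerfect A ∧ C ≤ A ∧ Module.finrank K ↥A = a} :=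
    Nat.sInf_mem ⟨_, ⊤, isPerfect_top, le_top, rfl⟩
  exact Nat.sInf_le ⟨A, hA, hrank, by rwa [inf_eq_left.2 hCA]⟩

end

variable {K : Type} [Field K] [Fintype K] {r : ℕ} {n : Fin r → ℕ}

theorem genW_perfect_bounds_general (C : Submodule K (((i : Fin r) → Fin (n i)) → K))
    (j : ℕ) (hj : 1 ≤ j) (hjk : j ≤ Module.finrank K ↥C) :
    genW {A | IsPerfect A} C j ≤ trk C + Module.finrank K ↥C - j
      ∧ minDist C + j - 1 ≤ genW {A | IsPerfect A} C j := by
  refine ⟨(genW_perfect_le_trk hjk).trans (by omega),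
    le_genW ⟨⊤, isPerfect_top, by rwa [inf_top_eq]⟩ fun A hA hjA => ?_⟩
  have hCA : C ⊓ A ≠ ⊥ := fun h => by rw [h, finrank_bot] at hjA; omega
  have : Module.finrank K ↥(C ⊓ A) + (minDist C - 1) ≤ Module.finrank K ↥A :=
    finrank_inf_add_minDist_sub_one_le hA hCA
  omega

/-- `t_j^ps(C) ≤ trk(C) + k − j` and `t_j^ps(C) ≥ d + j − 1`
for all `j ∈ {1,…,k}`. -/
theorem genW_perfect_bounds (C : Submodule K (((i : Fin r) → Fin (n i)) → K)) (hC : C ≠ ⊥)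
    (j : ℕ) (hj : 1 ≤ j) (hjk : j ≤ Module.finrank K ↥C) :
    genW {A | IsPerfect A} C j ≤ trk C + Module.finrank K ↥C - j
      ∧ minDist C + j - 1 ≤ genW {A | IsPerfect A} C j :=
  genW_perfect_bounds_general C j hj hjk

end TensorCodes
end
end

section
/- Let n_1 ≤ n_i for all i, n = ∏ n_i, and let A^R be the family of subspaces of F of the form A^{(1)} ⊗ F_q^{n_2} ⊗ ... ⊗ F_q^{n_r} (assuming n_1 < n_i for i ≥ 2). For a k-dimensional code C ≤ F, the Ravagnani-type generalized weights t_j^R satisfy t_j^R + n/n_1 ≤ t_{j + n/n_1}^R whenever j + n/n_1 ≤ k. -/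
/-!
The Ravagnani anticodes `U ⊗ 𝔽_q^{n_2} ⊗ ⋯ ⊗ 𝔽_q^{n_r}` are the arrays all of whose fibres along
the first coordinate lie in `U`, so they have dimension `(n/n_1) · dim U`. Take an anticode `A`
realising `t_{j+n/n_1}^R` and replace `U` by a hyperplane of it: the resulting anticode `A'` has
dimension `dim A - n/n_1`, and since `(C ∩ A) + A' ⊆ A`, the dimension formula gives
`dim (C ∩ A') ≥ dim (C ∩ A) - n/n_1 ≥ j`.
-/

open scoped Classical

noncomputable section

namespace TensorCodes

variable {K : Type} [Field K] [Fintype K] {r : ℕ} {n : Fin r → ℕ}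

theorem _root_.Submodule.exists_le_finrank_add_one_eq {𝕜 V : Type} [DivisionRing 𝕜]
    [AddCommGroup V] [Module 𝕜 V] [FiniteDimensional 𝕜 V] {U : Submodule 𝕜 V} (hU : U ≠ ⊥) :
    ∃ U' ≤ U, Module.finrank 𝕜 U' + 1 = Module.finrank 𝕜 U := by
  have : Nontrivial U := Submodule.nontrivial_iff_ne_bot.mpr hU
  obtain ⟨f, hf⟩ := exists_ne (0 : Module.Dual 𝕜 U)
  refine ⟨(LinearMap.ker f).map U.subtype, Submodule.map_subtype_le _ _, ?_⟩
  rw [Submodule.finrank_map_subtype_eq]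
  exact Module.Dual.finrank_ker_add_one_of_ne_zero hf

theorem genW_add_le_genW_add {𝕜 V : Type} [Field 𝕜] [AddCommGroup V] [Module 𝕜 V]
    [FiniteDimensional 𝕜 V] {𝒜 : Set (Submodule 𝕜 V)} {m : ℕ}
    (hstep : ∀ A ∈ 𝒜, A ≠ ⊥ →
      ∃ A' ∈ 𝒜, A' ≤ A ∧ Module.finrank 𝕜 A' + m = Module.finrank 𝕜 A)
    (C : Submodule 𝕜 V) {j : ℕ} (hex : ∃ A ∈ 𝒜, j + m ≤ Module.finrank 𝕜 ↥(C ⊓ A)) :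
    genW 𝒜 C j + m ≤ genW 𝒜 C (j + m) := by
  rcases Nat.eq_zero_or_pos m with rfl | hm
  · exact le_rfl
  obtain ⟨A, hA𝒜, hA, hCA⟩ :
      genW 𝒜 C (j + m) ∈
        {a | ∃ A ∈ 𝒜, Module.finrank 𝕜 A = a ∧ j + m ≤ Module.finrank 𝕜 ↥(C ⊓ A)} :=
    Nat.sInf_mem (by obtain ⟨A, hA𝒜, hCA⟩ := hex; exact ⟨_, A, hA𝒜, rfl, hCA⟩)
  rw [← hA]
  have hA0 : A ≠ ⊥ := by
    rintro rfl
    rw [inf_bot_eq, finrank_bot] at hCA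
    omega
  obtain ⟨A', hA'𝒜, hA'A, hA'⟩ := hstep A hA𝒜 hA0
  have hsup : Module.finrank 𝕜 ↥((C ⊓ A) ⊔ A') ≤ Module.finrank 𝕜 A :=
    Submodule.finrank_mono (sup_le inf_le_right hA'A)
  have hinf : (C ⊓ A) ⊓ A' = C ⊓ A' := by rw [inf_assoc, inf_eq_right.mpr hA'A]
  have hmod := Submodule.finrank_sup_add_finrank_inf_eq (C ⊓ A) A'
  rw [hinf] at hmod
  have hle : genW 𝒜 C j ≤ Module.finrank 𝕜 A' := Nat.sInf_le ⟨A', hA'𝒜, rfl, by omega⟩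
  omega

section FiberSpace

variable {𝕜 : Type} [Field 𝕜] {n : Fin (r + 1) → ℕ}

def fiberSpace (U : Submodule 𝕜 (Fin (n 0) → 𝕜)) :
    Submodule 𝕜 (((i : Fin (r + 1)) → Fin (n i)) → 𝕜) where
  carrier := {X | ∀ J : (i : Fin r) → Fin (n i.succ), (fun x => X (Fin.cons x J)) ∈ U}
  add_mem' ha hb J := U.add_mem (ha J) (hb J)
  zero_mem' _ := U.zero_mem
  smul_mem' c _ ha J := U.smul_mem c (ha J)

def fiberSpaceEquiv (U : Submodule 𝕜 (Fin (n 0) → 𝕜)) :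
    fiberSpace U ≃ₗ[𝕜] (((i : Fin r) → Fin (n i.succ)) → U) where
  toFun X J := ⟨fun x => X.1 (Fin.cons x J), X.2 J⟩
  map_add' _ _ := rfl
  map_smul' _ _ := rfl
  invFun f := ⟨fun J => (f (Fin.tail J)).1 (J 0), fun J => by simp⟩
  left_inv X := Subtype.ext <| funext fun J => congrArg X.1 (Fin.cons_self_tail J)
  right_inv f := funext fun J => Subtype.ext <| funext fun x => by simp [Fin.tail_cons]

theorem finrank_fiberSpace (U : Submodule 𝕜 (Fin (n 0) → 𝕜)) :
    Module.finrank 𝕜 (fiberSpace U) = (∏ i : Fin r, n i.succ) * Module.finrank 𝕜 U := by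
  rw [(fiberSpaceEquiv U).finrank_eq, Module.finrank_pi_fintype]
  simp [Fintype.card_pi]

theorem fiberSpace_mono {U U' : Submodule 𝕜 (Fin (n 0) → 𝕜)} (h : U' ≤ U) :
    fiberSpace U' ≤ fiberSpace U :=
  fun _ hX J => h (hX J)

theorem fiberSpace_top : fiberSpace (⊤ : Submodule 𝕜 (Fin (n 0) → 𝕜)) = ⊤ :=
  eq_top_iff.mpr fun _ _ _ => Submodule.mem_top

theorem simpleTensor_mem_fiberSpace {U : Submodule 𝕜 (Fin (n 0) → 𝕜)}
    {u : ∀ i, Fin (n i) → 𝕜} (hu : u 0 ∈ U) : simpleTensor u ∈ fiberSpace U := by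
  intro J
  have h : (fun x => simpleTensor u (Fin.cons x J)) = (∏ i : Fin r, u i.succ (J i)) • u 0 := by
    funext x
    simp [simpleTensor, Fin.prod_univ_succ, mul_comm]
  rw [h]
  exact U.smul_mem _ hu

theorem sum_simpleTensor_fiber (X : ((i : Fin (r + 1)) → Fin (n i)) → 𝕜) :
    ∑ J : (i : Fin r) → Fin (n i.succ),
      simpleTensor (Fin.cons (fun x => X (Fin.cons x J)) fun i => Pi.single (J i) 1) = X := by
  funext J₀
  rw [Finset.sum_apply, Finset.sum_eq_single (Fin.tail J₀)]
  · simp [simpleTensor, Fin.prod_univ_succ, Fin.cons_self_tail, Fin.tail]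
  · intro J _ hJ
    obtain ⟨i, hi⟩ : ∃ i, J i ≠ Fin.tail J₀ i := Function.ne_iff.mp hJ
    simp only [simpleTensor, Fin.prod_univ_succ, Fin.cons_zero, Fin.cons_succ]
    exact mul_eq_zero_of_right _ <| Finset.prod_eq_zero (Finset.mem_univ i) <|
      Pi.single_eq_of_ne' hi _
  · simp

theorem tp_update_top_eq_fiberSpace (U : Submodule 𝕜 (Fin (n 0) → 𝕜)) :
    tp (Function.update (fun i => (⊤ : Submodule 𝕜 (Fin (n i) → 𝕜))) 0 U) = fiberSpace U := by
  apply le_antisymm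
  · rw [tp, Submodule.span_le]
    rintro _ ⟨u, hu, rfl⟩
    exact simpleTensor_mem_fiberSpace (by simpa using hu 0)
  · intro X hX
    rw [← sum_simpleTensor_fiber X]
    refine Submodule.sum_mem _ fun J _ => Submodule.subset_span ⟨_, ?_, rfl⟩
    refine Fin.cases (by simpa using hX J) (fun i => ?_)
    simp

theorem exists_fiberSpace_le_finrank_add {U : Submodule 𝕜 (Fin (n 0) → 𝕜)}
    (hU : fiberSpace U ≠ ⊥) :
    ∃ U', fiberSpace U' ≤ fiberSpace U ∧
      Module.finrank 𝕜 (fiberSpace U') + ∏ i : Fin r, n i.succ =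
        Module.finrank 𝕜 (fiberSpace U) := by
  have hU : U ≠ ⊥ := by
    rintro rfl
    exact hU (Submodule.finrank_eq_zero.mp (by simp [finrank_fiberSpace]))
  obtain ⟨U', hU'U, hU'⟩ := Submodule.exists_le_finrank_add_one_eq hU
  refine ⟨U', fiberSpace_mono hU'U, ?_⟩
  rw [finrank_fiberSpace, finrank_fiberSpace, ← hU']
  ring

end FiberSpace

theorem _root_.Fin.prod_univ_erase_zero {M : Type} [CommMonoid M] (f : Fin (r + 1) → M) :
    ∏ i ∈ Finset.univ.erase 0, f i = ∏ i : Fin r, f i.succ := by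
  have h : Finset.univ.erase (0 : Fin (r + 1)) = Finset.univ.map (Fin.succEmb r) := by
    ext i
    simp [Fin.exists_succ_eq]
  rw [h, Finset.prod_map]
  rfl

theorem genW_R_step_general {n : Fin (r + 1) → ℕ}
    (C : Submodule K (((i : Fin (r + 1)) → Fin (n i)) → K))
    (j : ℕ)
    (hjk : j + ∏ i ∈ Finset.univ.erase (0 : Fin (r + 1)), n i ≤ Module.finrank K ↥C) :
    genW {A | ∃ U : Submodule K (Fin (n 0) → K),
          A = tp (Function.update (fun j' => (⊤ : Submodule K (Fin (n j') → K))) 0 U)} C j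
        + ∏ i ∈ Finset.univ.erase (0 : Fin (r + 1)), n i
      ≤ genW {A | ∃ U : Submodule K (Fin (n 0) → K),
          A = tp (Function.update (fun j' => (⊤ : Submodule K (Fin (n j') → K))) 0 U)} C
          (j + ∏ i ∈ Finset.univ.erase (0 : Fin (r + 1)), n i) := by
  simp only [tp_update_top_eq_fiberSpace, Fin.prod_univ_erase_zero] at hjk ⊢
  refine genW_add_le_genW_add ?_ C ⟨⊤, ⟨⊤, fiberSpace_top.symm⟩, by rwa [inf_top_eq]⟩
  rintro _ ⟨U, rfl⟩ hU
  obtain ⟨U', hU'U, hU'⟩ := exists_fiberSpace_le_finrank_add hU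
  exact ⟨_, ⟨U', rfl⟩, hU'U, hU'⟩

/-- for Ravagnani-type anticodes `A⁽¹⁾ ⊗ 𝔽_q^{n_2} ⊗ ⋯ ⊗ 𝔽_q^{n_r}`
(with `n_1 < n_i` for `i ≥ 2`), `t_j^R + n/n_1 ≤ t_{j+n/n_1}^R` whenever
`j + n/n_1 ≤ k`. -/
theorem genW_R_step {n : Fin (r + 1) → ℕ}
    (C : Submodule K (((i : Fin (r + 1)) → Fin (n i)) → K))
    (hn : ∀ i : Fin (r + 1), i ≠ 0 → n 0 < n i)
    (j : ℕ) (hj : 1 ≤ j)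
    (hjk : j + ∏ i ∈ Finset.univ.erase (0 : Fin (r + 1)), n i ≤ Module.finrank K ↥C) :
    genW {A | ∃ U : Submodule K (Fin (n 0) → K),
          A = tp (Function.update (fun j' => (⊤ : Submodule K (Fin (n j') → K))) 0 U)} C j
        + ∏ i ∈ Finset.univ.erase (0 : Fin (r + 1)), n i
      ≤ genW {A | ∃ U : Submodule K (Fin (n 0) → K),
          A = tp (Function.update (fun j' => (⊤ : Submodule K (Fin (n j') → K))) 0 U)} C
          (j + ∏ i ∈ Finset.univ.erase (0 : Fin (r + 1)), n i) :=
  genW_R_step_general C j hjk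

end TensorCodes
end
end

section
/- With notation as in the Ravagnani-type anticode setting, t_j^R(C) ≤ n − (n/n_1)·⌊(n_1/n)(k−j)⌋ and t_j^R(C) ≥ j for all j ∈ {1,...,k}. -/
open scoped Classical

noncomputable section

namespace TensorCodes

variable {K : Type} [Field K] [Fintype K] {r : ℕ} {n : Fin r → ℕ}

/-! ### Auxiliary machinery for Statement 15 -/

section Aux

variable {m : Fin (r + 1) → ℕ}

/-- The slice of an array along coordinate 0, the other coordinates given by `J`. -/
def slice0 (X : ((i : Fin (r + 1)) → Fin (m i)) → K)
    (J : (i : Fin (r + 1)) → Fin (m i)) : Fin (m 0) → K :=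
  fun t => X (Function.update J 0 t)

/-- The subspace of arrays all of whose 0-slices lie in `U`. -/
def sliceSub (U : Submodule K (Fin (m 0) → K)) :
    Submodule K (((i : Fin (r + 1)) → Fin (m i)) → K) where
  carrier := {X | ∀ J, slice0 X J ∈ U}
  add_mem' := fun ha hb J => U.add_mem (ha J) (hb J)
  zero_mem' := fun J => U.zero_mem
  smul_mem' := fun c X hX J => U.smul_mem c (hX J)

lemma tp_eq_sliceSub (h0 : 0 < m 0) (U : Submodule K (Fin (m 0) → K)) :
    tp (Function.update (fun j' => (⊤ : Submodule K (Fin (m j') → K))) 0 U) = sliceSub U := by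
  apply le_antisymm
  · rw [tp, Submodule.span_le]
    rintro X ⟨u, hu, rfl⟩ J
    have hu0 : u 0 ∈ U := by simpa using hu 0
    have hs : slice0 (simpleTensor u) J
        = (∏ i ∈ Finset.univ.erase (0 : Fin (r + 1)), u i (J i)) • u 0 := by
      funext t
      have := (Finset.mul_prod_erase Finset.univ
        (fun i => u i (Function.update J 0 t i)) (Finset.mem_univ (0 : Fin (r + 1)))).symm
      simp only [slice0, simpleTensor]
      rw [this, Function.update_self]
      have : ∀ i ∈ Finset.univ.erase (0 : Fin (r + 1)),
          u i (Function.update J 0 t i) = u i (J i) := by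
        intro i hi
        rw [Function.update_of_ne (Finset.mem_erase.mp hi).1]
      rw [Finset.prod_congr rfl this]
      simp [mul_comm]
    rw [hs]
    exact U.smul_mem _ hu0
  · intro X hX
    set z : Fin (m 0) := ⟨0, h0⟩
    set u : ((i : Fin (r + 1)) → Fin (m i)) → (i : Fin (r + 1)) → Fin (m i) → K :=
      fun J' i t => if h : i = 0 then X (Function.update J' i t)
        else (if t = J' i then 1 else 0) with hu
    have hXeq : X = ∑ J' ∈ Finset.univ.filter (fun J => J 0 = z),
        simpleTensor (u J') := by
      funext J
      rw [Finset.sum_apply]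
      rw [Finset.sum_eq_single_of_mem (Function.update J 0 z)
        (by simp [Function.update_self])]
      · simp only [simpleTensor]
        rw [← Finset.mul_prod_erase Finset.univ _ (Finset.mem_univ (0 : Fin (r + 1)))]
        have h1 : u (Function.update J 0 z) 0 (J 0) = X J := by
          simp only [hu, dif_pos]
          rw [Function.update_idem, Function.update_eq_self]
        have h2 : ∀ i ∈ Finset.univ.erase (0 : Fin (r + 1)),
            u (Function.update J 0 z) i (J i) = 1 := by
          intro i hi
          have hi0 := (Finset.mem_erase.mp hi).1
          simp only [hu, dif_neg hi0]
          rw [Function.update_of_ne hi0, if_pos rfl]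
        rw [h1, Finset.prod_congr rfl h2]
        simp
      · intro J' hJ' hne
        have hJ'0 : J' 0 = z := by simpa using hJ'
        obtain ⟨i, hi⟩ := Function.ne_iff.mp hne
        have hi0 : i ≠ 0 := by
          rintro rfl
          exact hi (by rw [hJ'0, Function.update_self])
        have hiJ : J' i ≠ J i := by
          rwa [Function.update_of_ne hi0] at hi
        simp only [simpleTensor]
        refine Finset.prod_eq_zero (Finset.mem_univ i) ?_
        simp only [hu, dif_neg hi0]
        rw [if_neg (Ne.symm hiJ)]
    rw [hXeq]
    refine Submodule.sum_mem _ fun J' _ => Submodule.subset_span ⟨u J', fun i => ?_, rfl⟩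
    by_cases h : i = 0
    · subst h
      simp only [Function.update_self]
      have : u J' 0 = slice0 X J' := by
        funext t; simp only [hu, dif_pos rfl]; rfl
      rw [this]; exact hX J'
    · rw [Function.update_of_ne h]; trivial

/-- The slice subspace is linearly equivalent to functions from the slice index set to `U`. -/
def sliceEquiv (h0 : 0 < m 0) (U : Submodule K (Fin (m 0) → K)) :
    ↥(sliceSub U) ≃ₗ[K]
      ({J : (i : Fin (r + 1)) → Fin (m i) // J 0 = ⟨0, h0⟩} → U) where
  toFun X J := ⟨slice0 X.1 J.1, X.2 J.1⟩
  map_add' X Y := rfl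
  map_smul' c X := rfl
  invFun g := ⟨fun J => (g ⟨Function.update J 0 ⟨0, h0⟩,
      Function.update_self _ _ _⟩ : Fin (m 0) → K) (J 0), by
    intro J'
    have : slice0 (fun J => (g ⟨Function.update J 0 ⟨0, h0⟩,
          Function.update_self _ _ _⟩ : Fin (m 0) → K) (J 0)) J'
        = (g ⟨Function.update J' 0 ⟨0, h0⟩, Function.update_self _ _ _⟩ : Fin (m 0) → K) := by
      funext t
      simp only [slice0, Function.update_idem, Function.update_self]
    rw [this]
    exact (g _).2⟩
  left_inv X := by
    ext J
    simp only [slice0, Function.update_idem, Function.update_eq_self]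
  right_inv g := by
    funext J'
    ext t
    have hJ : Function.update J'.1 0 (⟨0, h0⟩ : Fin (m 0)) = J'.1 := by
      funext i
      by_cases h : i = 0
      · subst h; rw [Function.update_self, J'.2]
      · rw [Function.update_of_ne h]
    simp only [slice0, Function.update_idem, Function.update_self]
    exact congrFun (congrArg (fun x => ((g x : U) : Fin (m 0) → K)) (Subtype.ext hJ)) t

/-- The slice index set is equivalent to the product over the nonzero coordinates. -/
def sliceIndexEquiv (h0 : 0 < m 0) :
    {J : (i : Fin (r + 1)) → Fin (m i) // J 0 = ⟨0, h0⟩} ≃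
      ((i : {i : Fin (r + 1) // i ≠ 0}) → Fin (m i.1)) where
  toFun J i := J.1 i.1
  invFun g := ⟨fun i => if h : i = 0 then Fin.cast (by rw [h]) (⟨0, h0⟩ : Fin (m 0))
      else g ⟨i, h⟩, by simp⟩
  left_inv J := by
    apply Subtype.ext
    funext i
    by_cases h : i = 0
    · subst h; simp [J.2]
    · simp [h]
  right_inv g := by
    funext i
    simp [i.2]

lemma finrank_sliceSub (h0 : 0 < m 0) (U : Submodule K (Fin (m 0) → K)) :
    Module.finrank K ↥(sliceSub U)
      = (∏ i ∈ Finset.univ.erase (0 : Fin (r + 1)), m i) * Module.finrank K ↥U := by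
  rw [(sliceEquiv h0 U).finrank_eq, Module.finrank_pi_fintype,
    Finset.sum_const, smul_eq_mul]
  congr 1
  rw [Finset.card_univ, Fintype.card_congr (sliceIndexEquiv h0), Fintype.card_pi]
  simp only [Fintype.card_fin]
  rw [Finset.prod_subtype (Finset.univ.erase (0 : Fin (r + 1)))
    (p := fun i => i ≠ 0) (by simp)]

lemma exists_submodule_finrank {m d : ℕ} (hd : d ≤ m) :
    ∃ U : Submodule K (Fin m → K), Module.finrank K ↥U = d := by
  refine ⟨Submodule.span K (Set.range ((Pi.basisFun K (Fin m)) ∘ Fin.castLE hd)), ?_⟩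
  rw [finrank_span_eq_card ((Pi.basisFun K (Fin m)).linearIndependent.comp _
    (Fin.castLE_injective hd))]
  simp

end Aux

/-- in the Ravagnani-type setting,
`t_j^R(C) ≤ n − (n/n_1)·⌊(n_1/n)(k−j)⌋` and `t_j^R(C) ≥ j` for `j ∈ {1,…,k}`. -/
theorem genW_R_bounds {n : Fin (r + 1) → ℕ}
    (C : Submodule K (((i : Fin (r + 1)) → Fin (n i)) → K))
    (hn : ∀ i : Fin (r + 1), i ≠ 0 → n 0 < n i)
    (j : ℕ) (hj : 1 ≤ j) (hjk : j ≤ Module.finrank K ↥C) :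
    genW {A | ∃ U : Submodule K (Fin (n 0) → K),
          A = tp (Function.update (fun j' => (⊤ : Submodule K (Fin (n j') → K))) 0 U)} C j
        ≤ (∏ i, n i)
          - (∏ i ∈ Finset.univ.erase (0 : Fin (r + 1)), n i)
            * (n 0 * (Module.finrank K ↥C - j) / ∏ i, n i)
      ∧ j ≤ genW {A | ∃ U : Submodule K (Fin (n 0) → K),
          A = tp (Function.update (fun j' => (⊤ : Submodule K (Fin (n j') → K))) 0 U)} C j  := by
  classical
  set k := Module.finrank K ↥C with hk
  have hV : Module.finrank K (((i : Fin (r + 1)) → Fin (n i)) → K) = ∏ i, n i := by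
    rw [Module.finrank_fintype_fun_eq_card, Fintype.card_pi]
    simp
  have hkN : k ≤ ∏ i, n i := hV ▸ C.finrank_le
  have hNpos : 0 < ∏ i, n i :=
    lt_of_lt_of_le (lt_of_lt_of_le Nat.zero_lt_one (hj.trans hjk)) hkN
  have hpos : ∀ i, 0 < n i := by
    intro i
    rcases Nat.eq_zero_or_pos (n i) with h | h
    · rw [Finset.prod_eq_zero (Finset.mem_univ i) h] at hNpos; omega
    · exact h
  set P := ∏ i ∈ Finset.univ.erase (0 : Fin (r + 1)), n i with hP
  have hPpos : 0 < P := Finset.prod_pos (fun i _ => hpos i)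
  have hNP : ∏ i, n i = n 0 * P := (Finset.mul_prod_erase _ _ (Finset.mem_univ 0)).symm
  set M := n 0 * (k - j) / ∏ i, n i with hM
  have hMeq : M = (k - j) / P := by
    rw [hM, hNP, Nat.mul_div_mul_left _ _ (hpos 0)]
  have hMP : M * P ≤ k - j := by rw [hMeq]; exact Nat.div_mul_le_self _ _
  have hMle : M ≤ n 0 := by
    rw [hMeq]
    calc (k - j) / P ≤ (∏ i, n i) / P := Nat.div_le_div_right (le_trans (Nat.sub_le _ _) hkN)
    _ = n 0 := by rw [hNP, Nat.mul_div_cancel _ hPpos]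
  obtain ⟨U, hU⟩ := exists_submodule_finrank (K := K) (Nat.sub_le (n 0) M)
  set A := tp (Function.update (fun j' => (⊤ : Submodule K (Fin (n j') → K))) 0 U) with hA
  have hAs : A = sliceSub U := tp_eq_sliceSub (hpos 0) U
  have hsplit : P * (n 0 - M) + P * M = n 0 * P := by
    rw [← Nat.mul_add, Nat.sub_add_cancel hMle, Nat.mul_comm]
  have hdimA : Module.finrank K ↥A = (∏ i, n i) - P * M := by
    rw [hAs, finrank_sliceSub (hpos 0) U, hU, hNP, ← hP]
    omega
  have hsup : Module.finrank K ↥(C ⊔ A) ≤ ∏ i, n i := hV ▸ (C ⊔ A).finrank_le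
  have hkey := Submodule.finrank_sup_add_finrank_inf_eq C A
  have hinf : j ≤ Module.finrank K ↥(C ⊓ A) := by
    have h1 : P * M ≤ k - j := by rw [Nat.mul_comm]; exact hMP
    omega
  have hset : Module.finrank K ↥A ∈ {a | ∃ A' ∈ {A | ∃ U' : Submodule K (Fin (n 0) → K),
        A = tp (Function.update (fun j' => (⊤ : Submodule K (Fin (n j') → K))) 0 U')},
      Module.finrank K ↥A' = a ∧ j ≤ Module.finrank K ↥(C ⊓ A')} :=
    ⟨A, ⟨U, rfl⟩, rfl, hinf⟩
  constructor
  · simp only [genW]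
    exact le_trans (Nat.sInf_le hset) (le_of_eq hdimA)
  · simp only [genW]
    obtain ⟨A', hA', hfr, hj'⟩ := Nat.sInf_mem ⟨_, hset⟩
    calc j ≤ Module.finrank K ↥(C ⊓ A') := hj'
    _ ≤ Module.finrank K ↥A' := Submodule.finrank_mono inf_le_right
    _ = _ := hfr


end TensorCodes
end
end

section
/- Let A be a finite lattice of subspaces of F (ordered by inclusion) with Möbius function μ, and C ≤ F a k-dimensional code. Define, for A ∈ A, B_A^{(j)} = [dim(C∩A) choose j]_q and W_A^{(j)} = #{D ≤ C∩A : dim D = j and A is the meet of all B ∈ A of dimension dim A containing D}. Then B_A^{(j)} = Σ_{A' ∈ A, A' ≤ A} W_{A'}^{(j)}, and consequently W_{A'}^{(j)} = Σ_{A ∈ A, A ≤ A'} μ(A, A') B_A^{(j)} by Möbius inversion. -/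
/-!
Each subspace `D ≤ C ⊓ A` with `A ∈ 𝒜` lies in a least member of `𝒜` (the meet of the members
containing it), which is again `≤ A`. Sorting the `j`-dimensional subspaces of `C ⊓ A` by this least
member gives `B_A = ∑_{A' ≤ A} W_{A'}`, because there are `[dim (C ⊓ A), j]_q` of them: an
`m`-dimensional space has `∏_{i<j} (q^m - q^i)` linearly independent `j`-tuples, and each
`j`-dimensional subspace is spanned by `∏_{i<j} (q^j - q^i)` of them.
The recursion for `μ` says that its row sums `∑_{A ≤ B ≤ A'} μ(A, B)` vanish for `A < A'`, so
`A' ↦ ∑_{A ≤ A'} μ(A, A') B_A` solves the same unitriangular system as `W`, and that system has a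
unique solution (look at a minimal point where two solutions differ).
-/

open scoped Classical

noncomputable section

namespace TensorCodes

variable {K : Type} [Field K] [Fintype K] {r : ℕ} {n : Fin r → ℕ}

/-- `W_{A'}^{(j)}`: the number of `j`-dimensional subspaces `D ≤ C ∩ A'` for which `A'`
is the minimal member of the lattice `𝒜` containing `D`. -/
def WW (𝒜 : Finset (Submodule K (((i : Fin r) → Fin (n i)) → K)))
    (C : Submodule K (((i : Fin r) → Fin (n i)) → K)) (j : ℕ)
    (A' : Submodule K (((i : Fin r) → Fin (n i)) → K)) : ℕ :=
  Set.ncard {D : Submodule K (((i : Fin r) → Fin (n i)) → K) |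
    Module.finrank K ↥D = j ∧ D ≤ C ⊓ A' ∧ ∀ B ∈ 𝒜, D ≤ B → A' ≤ B}

section Moebius

variable {α R : Type*} [PartialOrder α] [Ring R] {s : Finset α}

theorem eq_zero_of_sum_le_eq_zero {h : α → R} (hh : ∀ A ∈ s, ∑ B ∈ s with B ≤ A, h B = 0) :
    ∀ A ∈ s, h A = 0 := by
  by_contra! hne
  obtain ⟨A, hmin⟩ := (s.filter (h · ≠ 0)).exists_minimal (by simpa [Finset.Nonempty] using hne)
  obtain ⟨hA, hhA⟩ := Finset.mem_filter.mp hmin.prop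
  refine hhA ?_
  rw [← hh A hA, Finset.sum_eq_single_of_mem A (by simp [hA])]
  intro B hB hBA
  obtain ⟨hBs, hBle⟩ := Finset.mem_filter.mp hB
  by_contra hhB
  exact hBA (hmin.eq_of_le (Finset.mem_filter.mpr ⟨hBs, hhB⟩) hBle)

theorem sum_Icc_eq_ite_of_moebius_rec {μ : α → α → R} (hμ1 : ∀ A ∈ s, μ A A = 1)
    (hμ2 : ∀ A ∈ s, ∀ A' ∈ s, A < A' → μ A A' = -∑ B ∈ s with A ≤ B ∧ B < A', μ A B)
    {A A' : α} (hA : A ∈ s) (hA' : A' ∈ s) (hAA' : A ≤ A') :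
    ∑ B ∈ s with A ≤ B ∧ B ≤ A', μ A B = if A = A' then 1 else 0 := by
  rcases hAA'.eq_or_lt with rfl | hlt
  · rw [if_pos rfl, Finset.sum_eq_single_of_mem A (by simp [hA]) fun B hB hBA => ?_, hμ1 A hA]
    simp only [Finset.mem_filter] at hB
    exact absurd (le_antisymm hB.2.2 hB.2.1) hBA
  · have hsplit : s.filter (fun B => A ≤ B ∧ B ≤ A') =
        insert A' (s.filter (fun B => A ≤ B ∧ B < A')) := by
      ext B
      simp only [Finset.mem_filter, Finset.mem_insert, le_iff_lt_or_eq (b := A')]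
      aesop
    rw [if_neg hlt.ne, hsplit, Finset.sum_insert (by simp), hμ2 A hA A' hA' hlt, neg_add_cancel]

variable {μ : α → α → R}
  (hrow : ∀ A ∈ s, ∀ A' ∈ s, A ≤ A' → ∑ B ∈ s with A ≤ B ∧ B ≤ A', μ A B = if A = A' then 1 else 0)
include hrow

theorem sum_le_sum_moebius_mul (f : α → R) {A : α} (hA : A ∈ s) :
    ∑ B ∈ s with B ≤ A, ∑ C ∈ s with C ≤ B, μ C B * f C = f A := by
  rw [Finset.sum_comm' (t' := s.filter (· ≤ A)) (s' := fun C => s.filter fun B => C ≤ B ∧ B ≤ A)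
    fun B C => by
      simp only [Finset.mem_filter]
      exact ⟨fun ⟨⟨hB, hBA⟩, hC, hCB⟩ => ⟨⟨hB, hCB, hBA⟩, hC, hCB.trans hBA⟩,
        fun ⟨⟨hB, hCB, hBA⟩, hC, _⟩ => ⟨⟨hB, hBA⟩, hC, hCB⟩⟩]
  calc ∑ C ∈ s with C ≤ A, ∑ B ∈ s with C ≤ B ∧ B ≤ A, μ C B * f C
      = ∑ C ∈ s with C ≤ A, (if C = A then 1 else 0) * f C := by
        refine Finset.sum_congr rfl fun C hC => ?_
        obtain ⟨hCs, hCA⟩ := Finset.mem_filter.mp hC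
        rw [← Finset.sum_mul, hrow C hCs A hA hCA]
    _ = f A := by simp [hA]

theorem moebius_inversion_of_sum_le {f g : α → R}
    (hfg : ∀ A ∈ s, f A = ∑ B ∈ s with B ≤ A, g B) :
    ∀ A ∈ s, g A = ∑ B ∈ s with B ≤ A, μ B A * f B := by
  have hdiff : ∀ A ∈ s,
      ∑ B ∈ s with B ≤ A, (g B - ∑ C ∈ s with C ≤ B, μ C B * f C) = 0 := fun A hA => by
    rw [Finset.sum_sub_distrib, sum_le_sum_moebius_mul hrow f hA, hfg A hA, sub_self]
  exact fun A hA => sub_eq_zero.mp (eq_zero_of_sum_le_eq_zero hdiff A hA)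

end Moebius

section Hull

open Finset

variable {L : Type*} [SemilatticeInf L] [OrderTop L]

-- `⊤` when no member of `𝒜` lies above `D`.
def hull (𝒜 : Finset L) (D : L) : L := (𝒜.filter (D ≤ ·)).inf id

variable {𝒜 : Finset L} {D A' B : L}

theorem le_hull : D ≤ hull 𝒜 D := Finset.le_inf fun _ hB => (Finset.mem_filter.mp hB).2

theorem hull_le (hB : B ∈ 𝒜) (hDB : D ≤ B) : hull 𝒜 D ≤ B :=
  Finset.inf_le (f := id) (Finset.mem_filter.mpr ⟨hB, hDB⟩)

theorem hull_mem (hmeet : ∀ A ∈ 𝒜, ∀ B ∈ 𝒜, A ⊓ B ∈ 𝒜) (hB : B ∈ 𝒜) (hDB : D ≤ B) :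
    hull 𝒜 D ∈ 𝒜 := by
  have hne : (𝒜.filter (D ≤ ·)).Nonempty := ⟨B, Finset.mem_filter.mpr ⟨hB, hDB⟩⟩
  rw [hull, ← Finset.inf'_eq_inf hne]
  exact Finset.inf'_mem (𝒜 : Set L) hmeet _ hne id fun C hC => (Finset.mem_filter.mp hC).1

theorem hull_eq_iff (hA' : A' ∈ 𝒜) : hull 𝒜 D = A' ↔ D ≤ A' ∧ ∀ B ∈ 𝒜, D ≤ B → A' ≤ B := by
  refine ⟨?_, fun ⟨hDA', hleast⟩ => (hull_le hA' hDA').antisymm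
    (Finset.le_inf fun B hB => hleast B (Finset.mem_filter.mp hB).1 (Finset.mem_filter.mp hB).2)⟩
  rintro rfl
  exact ⟨le_hull, fun B hB hDB => hull_le hB hDB⟩

theorem card_filter_le_eq_sum_card_filter_least (hmeet : ∀ A ∈ 𝒜, ∀ B ∈ 𝒜, A ⊓ B ∈ 𝒜)
    (S : Finset L) {A : L} (hA : A ∈ 𝒜) :
    #{D ∈ S | D ≤ A} = ∑ A' ∈ 𝒜 with A' ≤ A, #{D ∈ S | D ≤ A' ∧ ∀ B ∈ 𝒜, D ≤ B → A' ≤ B} := by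
  have hmaps : Set.MapsTo (hull 𝒜) ↑{D ∈ S | D ≤ A} ↑{A' ∈ 𝒜 | A' ≤ A} := fun D hD => by
    have hDA := (Finset.mem_filter.mp hD).2
    exact Finset.mem_filter.mpr ⟨hull_mem hmeet hA hDA, hull_le hA hDA⟩
  rw [Finset.card_eq_sum_card_fiberwise hmaps]
  refine Finset.sum_congr rfl fun A' hA' => ?_
  obtain ⟨hA'𝒜, hA'A⟩ := Finset.mem_filter.mp hA'
  rw [Finset.filter_filter]
  refine congrArg Finset.card (Finset.filter_congr fun D _ => ?_)
  rw [hull_eq_iff hA'𝒜]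
  exact ⟨fun h => h.2, fun h => ⟨h.1.trans hA'A, h⟩⟩

theorem ncard_le_eq_sum_ncard_least (hmeet : ∀ A ∈ 𝒜, ∀ B ∈ 𝒜, A ⊓ B ∈ 𝒜)
    {S : Set L} (hS : S.Finite) {A : L} (hA : A ∈ 𝒜) :
    {D ∈ S | D ≤ A}.ncard =
      ∑ A' ∈ 𝒜 with A' ≤ A, {D ∈ S | D ≤ A' ∧ ∀ B ∈ 𝒜, D ≤ B → A' ≤ B}.ncard := by
  convert card_filter_le_eq_sum_card_filter_least hmeet hS.toFinset hA using 1
  · rw [← Set.ncard_coe_finset]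
    simp
  · refine sum_congr rfl fun A' _ => ?_
    rw [← Set.ncard_coe_finset]
    simp

end Hull

section QBinomial

open Finset

theorem prod_range_pow_sub_pow {R : Type*} [CommRing R] (q : R) {j m : ℕ} (h : j ≤ m) :
    ∏ i ∈ range j, (q ^ m - q ^ i) = (∏ i ∈ range j, q ^ i) * ∏ i ∈ range j, (q ^ (m - i) - 1) := by
  rw [← prod_mul_distrib]
  refine prod_congr rfl fun i hi => ?_
  rw [mul_sub, mul_one, ← pow_add, Nat.add_sub_cancel' ((mem_range.mp hi).le.trans h)]

theorem qbin_natCast_of_lt (q : ℚ) {m j : ℕ} (h : m < j) : qbin q m j = 0 := by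
  rw [qbin, if_neg (by omega), if_neg (by omega), if_neg (by omega), if_pos (by omega)]

theorem qbin_natCast_mul_prod {q : ℚ} (hq : 1 < q) {m j : ℕ} (h : j ≤ m) :
    qbin q m j * ∏ i ∈ range j, (q ^ j - q ^ i) = ∏ i ∈ range j, (q ^ m - q ^ i) := by
  rcases j.eq_zero_or_pos with rfl | hj
  · simp [qbin]
  have hfactor (i : ℕ) (hi : i ∈ range j) :
      (q ^ ((m : ℤ) - i) - 1) / (q ^ ((i : ℤ) + 1) - 1) =
        (q ^ (m - i) - 1) / (q ^ (i + 1) - 1) := by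
    rw [← Nat.cast_sub ((mem_range.mp hi).le.trans h), zpow_natCast, ← Nat.cast_succ, zpow_natCast]
  have hreflect : ∏ i ∈ range j, (q ^ (j - i) - 1) = ∏ i ∈ range j, (q ^ (i + 1) - 1) := by
    rw [← prod_range_reflect (fun i => q ^ (i + 1) - 1)]
    refine prod_congr rfl fun i hi => ?_
    rw [show j - 1 - i + 1 = j - i by have := mem_range.mp hi; omega]
  have hne : ∏ i ∈ range j, (q ^ (i + 1) - 1) ≠ 0 :=
    prod_ne_zero_iff.mpr fun i _ => sub_ne_zero.mpr (one_lt_pow₀ hq i.succ_ne_zero).ne'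
  rw [qbin, if_neg (by omega), if_neg (by omega), if_neg (by omega), if_neg (by omega),
    Int.toNat_natCast, prod_congr rfl hfactor, prod_div_distrib, prod_range_pow_sub_pow q le_rfl,
    prod_range_pow_sub_pow q h, hreflect]
  field_simp

end QBinomial

open Module Submodule in
theorem ncard_finrank_eq_le {R M : Type*} [Ring R] [AddCommGroup M] [Module R M]
    (W : Submodule R M) (j : ℕ) :
    {D : Submodule R M | finrank R D = j ∧ D ≤ W}.ncard =
      Nat.card {D : Submodule R W // finrank R D = j} := by
  rw [← Nat.card_coe_set_eq]
  refine Nat.card_congr <| (Equiv.subtypeEquivRight fun _ => and_comm).trans <|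
    (Equiv.subtypeSubtypeEquivSubtypeInter (· ≤ W) (finrank R · = j)).symm.trans <|
      ((MapSubtype.orderIso W).toEquiv.subtypeEquiv fun D => ?_).symm
  change _ ↔ finrank R (D.map W.subtype) = j
  rw [finrank_map_subtype_eq]

section SubspaceCount

open Module Submodule Finset

variable {𝕜 V : Type*} [DivisionRing 𝕜] [Fintype 𝕜] [AddCommGroup V] [Module 𝕜 V] [Finite V]
  {j : ℕ}

theorem card_linearIndependent_span_eq {D : Submodule 𝕜 V} (hD : finrank 𝕜 D = j) :
    Nat.card {s : {s : Fin j → V // LinearIndependent 𝕜 s} // span 𝕜 (Set.range s.1) = D} =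
      ∏ i : Fin j, (Fintype.card 𝕜 ^ j - Fintype.card 𝕜 ^ i.val) := by
  have hcount := card_linearIndependent (K := 𝕜) (V := D) hD.ge
  rw [hD] at hcount
  rw [← hcount]
  refine Nat.card_congr
    { toFun := fun s => ⟨fun i => ⟨s.1.1 i, s.2.le (subset_span ⟨i, rfl⟩)⟩,
        .of_comp D.subtype s.1.2⟩
      invFun := fun t => ⟨⟨D.subtype ∘ t.1, t.2.map' D.subtype (ker_subtype D)⟩, ?_⟩
      left_inv := fun _ => rfl
      right_inv := fun _ => rfl }
  refine eq_of_le_of_finrank_eq (span_le.mpr ?_) ?_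
  · rintro _ ⟨i, rfl⟩
    exact (t.1 i).2
  · rw [finrank_span_eq_card (t.2.map' D.subtype (ker_subtype D)), Fintype.card_fin, hD]

theorem card_finrank_eq_mul_prod (hj : j ≤ finrank 𝕜 V) :
    Nat.card {D : Submodule 𝕜 V // finrank 𝕜 D = j} *
        ∏ i : Fin j, (Fintype.card 𝕜 ^ j - Fintype.card 𝕜 ^ i.val) =
      ∏ i : Fin j, (Fintype.card 𝕜 ^ finrank 𝕜 V - Fintype.card 𝕜 ^ i.val) := by
  have := Fintype.ofFinite {D : Submodule 𝕜 V // finrank 𝕜 D = j}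
  let spanOf (s : {s : Fin j → V // LinearIndependent 𝕜 s}) :
      {D : Submodule 𝕜 V // finrank 𝕜 D = j} :=
    ⟨span 𝕜 (Set.range s.1), by rw [finrank_span_eq_card s.2, Fintype.card_fin]⟩
  rw [← card_linearIndependent hj, ← Nat.card_congr (Equiv.sigmaFiberEquiv spanOf),
    Nat.card_sigma]
  have hfiber (D : {D : Submodule 𝕜 V // finrank 𝕜 D = j}) :
      Nat.card {s // spanOf s = D} = ∏ i : Fin j, (Fintype.card 𝕜 ^ j - Fintype.card 𝕜 ^ i.val) :=
    (Nat.card_congr (Equiv.subtypeEquivRight fun _ => Subtype.ext_iff)).trans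
      (card_linearIndependent_span_eq D.2)
  simp only [hfiber, Finset.sum_const, Finset.card_univ, smul_eq_mul, Nat.card_eq_fintype_card]

theorem qbin_eq_card_finrank_eq (j : ℕ) :
    qbin (Fintype.card 𝕜) (finrank 𝕜 V) j = Nat.card {D : Submodule 𝕜 V // finrank 𝕜 D = j} := by
  set q := Fintype.card 𝕜
  rcases lt_or_ge (finrank 𝕜 V) j with hlt | hle
  · have : IsEmpty {D : Submodule 𝕜 V // finrank 𝕜 D = j} :=
      ⟨fun D => (D.2 ▸ D.1.finrank_le).not_gt hlt⟩
    rw [qbin_natCast_of_lt _ hlt, Nat.card_of_isEmpty, Nat.cast_zero]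
  have hq : (1 : ℚ) < q := by exact_mod_cast Fintype.one_lt_card
  have hcast {a : ℕ} (ha : j ≤ a) :
      ((∏ i : Fin j, (q ^ a - q ^ i.val) : ℕ) : ℚ) =
        ∏ i ∈ range j, ((q : ℚ) ^ a - (q : ℚ) ^ i) := by
    rw [Fin.prod_univ_eq_prod_range (fun i => q ^ a - q ^ i), Nat.cast_prod]
    refine prod_congr rfl fun i hi => ?_
    rw [Nat.cast_sub (Nat.pow_le_pow_right Fintype.card_pos ((mem_range.mp hi).le.trans ha)),
      Nat.cast_pow, Nat.cast_pow]
  have hne : ∏ i ∈ range j, ((q : ℚ) ^ j - (q : ℚ) ^ i) ≠ 0 :=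
    prod_ne_zero_iff.mpr fun i hi => sub_ne_zero.mpr (pow_lt_pow_right₀ hq (mem_range.mp hi)).ne'
  refine mul_right_cancel₀ hne ?_
  rw [qbin_natCast_mul_prod hq hle, ← hcast le_rfl, ← hcast hle, ← Nat.cast_mul,
    card_finrank_eq_mul_prod hle]

theorem qbin_finrank_inf_eq_sum_ncard_least (𝒜 : Finset (Submodule 𝕜 V))
    (hmeet : ∀ A ∈ 𝒜, ∀ B ∈ 𝒜, A ⊓ B ∈ 𝒜) (C : Submodule 𝕜 V) (j : ℕ) {A : Submodule 𝕜 V}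
    (hA : A ∈ 𝒜) :
    qbin (Fintype.card 𝕜) (finrank 𝕜 ↥(C ⊓ A)) j = ∑ A' ∈ 𝒜 with A' ≤ A,
      ({D : Submodule 𝕜 V | finrank 𝕜 D = j ∧ D ≤ C ⊓ A' ∧ ∀ B ∈ 𝒜, D ≤ B → A' ≤ B}.ncard : ℚ) := by
  let S := {D : Submodule 𝕜 V | finrank 𝕜 D = j ∧ D ≤ C}
  have hCA : {D : Submodule 𝕜 V | finrank 𝕜 D = j ∧ D ≤ C ⊓ A} = {D ∈ S | D ≤ A} :=
    Set.ext fun D => by simp [S, and_assoc]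
  have hS (A' : Submodule 𝕜 V) :
      {D : Submodule 𝕜 V | finrank 𝕜 D = j ∧ D ≤ C ⊓ A' ∧ ∀ B ∈ 𝒜, D ≤ B → A' ≤ B} =
        {D ∈ S | D ≤ A' ∧ ∀ B ∈ 𝒜, D ≤ B → A' ≤ B} :=
    Set.ext fun D => by simp [S, and_assoc]
  rw [qbin_eq_card_finrank_eq, ← ncard_finrank_eq_le, hCA,
    ncard_le_eq_sum_ncard_least hmeet (Set.toFinite S) hA, Nat.cast_sum]
  simp only [hS]

end SubspaceCount

theorem moebius_W_B_general (𝒜 : Finset (Submodule K (((i : Fin r) → Fin (n i)) → K)))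
    (hmeet : ∀ A ∈ 𝒜, ∀ B ∈ 𝒜, A ⊓ B ∈ 𝒜)
    (C : Submodule K (((i : Fin r) → Fin (n i)) → K)) (j : ℕ)
    (μ : Submodule K (((i : Fin r) → Fin (n i)) → K) →
      Submodule K (((i : Fin r) → Fin (n i)) → K) → ℤ)
    (hμ1 : ∀ A ∈ 𝒜, μ A A = 1)
    (hμ2 : ∀ A ∈ 𝒜, ∀ A' ∈ 𝒜, A < A' →
      μ A A' = -∑ B ∈ 𝒜.filter (fun B => A ≤ B ∧ B < A'), μ A B) :
    (∀ A ∈ 𝒜,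
        qbin (Fintype.card K : ℚ) (Module.finrank K ↥(C ⊓ A) : ℤ) (j : ℤ)
          = ∑ A' ∈ 𝒜.filter (fun A' => A' ≤ A), (WW 𝒜 C j A' : ℚ))
      ∧ (∀ A' ∈ 𝒜,
        (WW 𝒜 C j A' : ℚ)
          = ∑ A ∈ 𝒜.filter (fun A => A ≤ A'),
              (μ A A' : ℚ) * qbin (Fintype.card K : ℚ)
                (Module.finrank K ↥(C ⊓ A) : ℤ) (j : ℤ)) := by
  have hbinomial := fun A (hA : A ∈ 𝒜) => qbin_finrank_inf_eq_sum_ncard_least 𝒜 hmeet C j hA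
  have hμ1' : ∀ A ∈ 𝒜, (μ A A : ℚ) = 1 := fun A hA => by simp [hμ1 A hA]
  have hμ2' : ∀ A ∈ 𝒜, ∀ A' ∈ 𝒜, A < A' →
      (μ A A' : ℚ) = -∑ B ∈ 𝒜 with A ≤ B ∧ B < A', (μ A B : ℚ) :=
    fun A hA A' hA' hlt => by simp [hμ2 A hA A' hA' hlt]
  exact ⟨hbinomial, moebius_inversion_of_sum_le
    (fun A hA A' hA' => sum_Icc_eq_ite_of_moebius_rec hμ1' hμ2' hA hA') hbinomial⟩

/-- for a finite lattice `𝒜` of subspaces with Möbius function `μ`, the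
binomial moments `B_A^{(j)} = [dim(C∩A), j]_q` and the counts `W_{A'}^{(j)}` satisfy
`B_A^{(j)} = ∑_{A' ≤ A} W_{A'}^{(j)}` and, by Möbius inversion,
`W_{A'}^{(j)} = ∑_{A ≤ A'} μ(A, A') B_A^{(j)}`. -/
theorem moebius_W_B (𝒜 : Finset (Submodule K (((i : Fin r) → Fin (n i)) → K)))
    (hmeet : ∀ A ∈ 𝒜, ∀ B ∈ 𝒜, A ⊓ B ∈ 𝒜)
    (C : Submodule K (((i : Fin r) → Fin (n i)) → K)) (j : ℕ)
    (μ : Submodule K (((i : Fin r) → Fin (n i)) → K) →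
      Submodule K (((i : Fin r) → Fin (n i)) → K) → ℤ)
    (hμ0 : ∀ A A', ¬ A ≤ A' → μ A A' = 0)
    (hμ1 : ∀ A ∈ 𝒜, μ A A = 1)
    (hμ2 : ∀ A ∈ 𝒜, ∀ A' ∈ 𝒜, A < A' →
      μ A A' = -∑ B ∈ 𝒜.filter (fun B => A ≤ B ∧ B < A'), μ A B) :
    (∀ A ∈ 𝒜,
        qbin (Fintype.card K : ℚ) (Module.finrank K ↥(C ⊓ A) : ℤ) (j : ℤ)
          = ∑ A' ∈ 𝒜.filter (fun A' => A' ≤ A), (WW 𝒜 C j A' : ℚ))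
      ∧ (∀ A' ∈ 𝒜,
        (WW 𝒜 C j A' : ℚ)
          = ∑ A ∈ 𝒜.filter (fun A => A ≤ A'),
              (μ A A' : ℚ) * qbin (Fintype.card K : ℚ)
                (Module.finrank K ↥(C ⊓ A) : ℤ) (j : ℤ)) :=
  moebius_W_B_general 𝒜 hmeet C j μ hμ1 hμ2

end TensorCodes
end
end

section
/- Let C ≤ F be a k-dimensional code, n = dim F, and A a collection of subspaces of F closed under the bijection A ↦ A^⊥ between anticodes and dual anticodes. For a ∈ {0,...,n} and j ∈ {1,...,k}, the generalized tensor binomial moments B_a^{(j)}(C) = Σ_{A ∈ A, dim A = a} [dim(C∩A) choose j]_q satisfy the MacWilliams-type identity B_a^{(j)}(C) = Σ_{p=0}^{j} q^{p(k+a−n−j+p)} [k+a−n choose j−p]_q · B̄_{n−a}^{(p)}(C^⊥), where B̄_{n−a}^{(p)}(C^⊥) = Σ_{A ∈ A, dim A = a} [dim(C^⊥ ∩ A^⊥) choose p]_q. -/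
/-
The identity holds term by term. For every subspace `A`, inclusion–exclusion for
`C^⊥ ⊓ A^⊥ = (C ⊔ A)^⊥` gives `dim (C ⊓ A) = dim (C^⊥ ⊓ A^⊥) + (k + dim A - n)`, and the
`q`-Vandermonde identity expands `[m + s, j]_q` as
`∑_p q^{p(s - j + p)} [s, j - p]_q [m, p]_q`, valid for every integer `s` when `m` is a natural
number. Summing over the members of `𝒜` of dimension `a` gives the theorem.
-/

open scoped Classical

noncomputable section

namespace TensorCodes

variable {K : Type} [Field K] [Fintype K] {r : ℕ} {n : Fin r → ℕ}

open Finset Module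

lemma prod_zpow_eq_zpow_sum {G₀ ι : Type*} [CommGroupWithZero G₀] {x : G₀} (hx : x ≠ 0)
    (s : Finset ι) (f : ι → ℤ) : ∏ i ∈ s, x ^ f i = x ^ ∑ i ∈ s, f i := by
  induction s using Finset.induction with
  | empty => simp
  | insert y s hy ih => rw [prod_insert hy, sum_insert hy, zpow_add₀ hx, ih]

section GaussianBinomial

variable {q : ℚ}

/-- Unlike `qbin`, this needs no case split on the sign of `a`, so Pascal's rule holds for every
`a : ℤ`. -/
def gaussBinom (q : ℚ) (a : ℤ) (b : ℕ) : ℚ :=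
  (∏ i ∈ range b, (q ^ (a - i) - 1)) / ∏ i ∈ range b, (q ^ ((i : ℤ) + 1) - 1)

lemma sum_range_sub_natCast (a : ℤ) (b : ℕ) :
    ∑ i ∈ range b, (a - i) = a * b - b * (b - 1) / 2 := by
  have h := sum_range_id_mul_two b
  rcases b.eq_zero_or_pos with rfl | hb
  · simp
  zify [hb] at h
  rw [sum_sub_distrib, sum_const, card_range, nsmul_eq_mul, ← h,
    Int.mul_ediv_cancel _ two_ne_zero]
  ring

lemma prod_range_zpow_sub_one_eq (hq : q ≠ 0) (a : ℤ) (b : ℕ) :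
    ∏ i ∈ range b, (q ^ (a - i) - 1)
      = (-1) ^ b * q ^ (a * b - b * (b - 1) / 2) * ∏ i ∈ range b, (q ^ (-a + b - 1 - i) - 1) := by
  have hreflect : ∏ i ∈ range b, (q ^ (-a + b - 1 - i) - 1) = ∏ i ∈ range b, (q ^ (-a + i) - 1) := by
    rw [← prod_range_reflect]
    refine prod_congr rfl fun i hi => ?_
    rw [Nat.cast_sub (by simp at hi; omega), Nat.cast_sub (by simp at hi; omega)]
    ring_nf
  have hfactor (i : ℕ) : q ^ (a - i) - 1 = -1 * q ^ (a - i) * (q ^ (-a + i) - 1) := by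
    have : q ^ (a - i) * q ^ (-a + i) = 1 := by
      rw [← zpow_add₀ hq, show a - i + (-a + i) = 0 by ring, zpow_zero]
    linear_combination this
  rw [hreflect, ← sum_range_sub_natCast, ← prod_zpow_eq_zpow_sum hq, ← card_range b, ← prod_const,
    card_range, ← prod_mul_distrib, ← prod_mul_distrib]
  exact prod_congr rfl fun i _ => hfactor i

lemma qbin_natCast (hq : q ≠ 0) (a : ℤ) (b : ℕ) : qbin q a b = gaussBinom q a b := by
  rcases b.eq_zero_or_pos with rfl | hb
  · simp [qbin, gaussBinom]
  have hb0 : ¬ (b : ℤ) < 0 := by omega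
  have hb0' : (b : ℤ) ≠ 0 := by omega
  rw [qbin, if_neg hb0, if_neg hb0', Int.toNat_natCast, gaussBinom]
  split_ifs with ha hab
  · rw [prod_div_distrib, prod_range_zpow_sub_one_eq hq a b, mul_div_assoc]
  · have hfactor : q ^ (a - (a.toNat : ℤ)) - 1 = 0 := by
      rw [Int.toNat_of_nonneg (not_lt.1 ha), sub_self, zpow_zero, sub_self]
    rw [prod_eq_zero (mem_range.2 (show a.toNat < b by omega)) hfactor, zero_div]
  · rw [prod_div_distrib]

lemma zpow_natCast_add_one_sub_one_ne_zero (hq : 1 < q) (i : ℕ) : q ^ ((i : ℤ) + 1) - 1 ≠ 0 :=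
  sub_ne_zero.2 (one_lt_zpow₀ hq (by positivity)).ne'

@[simp]
lemma gaussBinom_zero_right (a : ℤ) : gaussBinom q a 0 = 1 := by
  simp [gaussBinom]

lemma gaussBinom_zero_left {b : ℕ} (hb : 0 < b) : gaussBinom q 0 b = 0 := by
  rw [gaussBinom, prod_eq_zero (mem_range.2 hb) (by simp), zero_div]

lemma gaussBinom_succ (hq : 1 < q) (a : ℤ) (c : ℕ) :
    gaussBinom q a (c + 1)
      = q ^ (a - 1 - c) * gaussBinom q (a - 1) c + gaussBinom q (a - 1) (c + 1) := by
  have hnum : ∏ i ∈ range (c + 1), (q ^ (a - i) - 1)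
      = (q ^ a - 1) * ∏ i ∈ range c, (q ^ (a - 1 - i) - 1) := by
    rw [prod_range_succ', mul_comm]
    congr 1
    · simp
    · refine prod_congr rfl fun i _ => ?_
      push_cast
      ring_nf
  have hqa : q ^ a = q ^ ((c : ℤ) + 1) * q ^ (a - 1 - c) := by
    rw [← zpow_add₀ (by positivity)]
    ring_nf
  have hden : ∏ i ∈ range c, (q ^ ((i : ℤ) + 1) - 1) ≠ 0 :=
    prod_ne_zero_iff.2 fun i _ => zpow_natCast_add_one_sub_one_ne_zero hq i
  have hc := zpow_natCast_add_one_sub_one_ne_zero hq c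
  simp only [gaussBinom]
  rw [hnum, prod_range_succ _ c, prod_range_succ _ c, hqa]
  field_simp
  ring

/-- The `q`-Vandermonde identity. -/
lemma gaussBinom_natCast_add (hq : 1 < q) (s : ℤ) (m j : ℕ) :
    gaussBinom q (m + s) j
      = ∑ p ∈ range (j + 1), q ^ ((p : ℤ) * (s - j + p)) * gaussBinom q s (j - p)
          * gaussBinom q m p := by
  induction m generalizing j with
  | zero =>
    rw [sum_eq_single_of_mem 0 (by simp)]
    · simp
    · intro p _ hp
      rw [Nat.cast_zero, gaussBinom_zero_left (Nat.pos_of_ne_zero hp), mul_zero]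
  | succ m ih =>
    cases j with
    | zero => simp
    | succ c =>
      have hterm (t : ℕ) :
          q ^ (((t + 1 : ℕ) : ℤ) * (s - ((c + 1 : ℕ) : ℤ) + ((t + 1 : ℕ) : ℤ)))
              * gaussBinom q s (c + 1 - (t + 1)) * gaussBinom q ((m + 1 : ℕ) : ℤ) (t + 1)
            = q ^ ((m : ℤ) + s - c) * (q ^ ((t : ℤ) * (s - c + t)) * gaussBinom q s (c - t)
                * gaussBinom q m t)
              + q ^ (((t + 1 : ℕ) : ℤ) * (s - ((c + 1 : ℕ) : ℤ) + ((t + 1 : ℕ) : ℤ)))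
                * gaussBinom q s (c + 1 - (t + 1)) * gaussBinom q m (t + 1) := by
        have hexp : q ^ ((m : ℤ) + s - c) * q ^ ((t : ℤ) * (s - c + t))
            = q ^ (((t + 1 : ℕ) : ℤ) * (s - ((c + 1 : ℕ) : ℤ) + ((t + 1 : ℕ) : ℤ)))
              * q ^ ((m : ℤ) - t) := by
          rw [← zpow_add₀ (by positivity), ← zpow_add₀ (by positivity)]
          push_cast
          ring_nf
        rw [show ((m + 1 : ℕ) : ℤ) = m + 1 by push_cast; ring, gaussBinom_succ hq,
          add_sub_cancel_right, Nat.add_sub_add_right]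
        linear_combination gaussBinom q s (c - t) * gaussBinom q m t * hexp.symm
      rw [show ((m + 1 : ℕ) : ℤ) + s = m + s + 1 by push_cast; ring, gaussBinom_succ hq,
        add_sub_cancel_right, ih, ih]
      conv_rhs => rw [sum_range_succ', sum_congr rfl fun t _ => hterm t, sum_add_distrib, ← mul_sum]
      rw [sum_range_succ' _ (c + 1)]
      simp only [gaussBinom_zero_right]
      ring

lemma qbin_natCast_add (hq : 1 < q) (s : ℤ) (m j : ℕ) :
    qbin q (m + s) j
      = ∑ p ∈ range (j + 1), q ^ ((p : ℤ) * (s - j + p)) * qbin q s ((j : ℤ) - p)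
          * qbin q m p := by
  have hq0 : q ≠ 0 := by positivity
  rw [qbin_natCast hq0, gaussBinom_natCast_add hq]
  refine sum_congr rfl fun p hp => ?_
  rw [← Nat.cast_sub (by simp at hp; omega), qbin_natCast hq0, qbin_natCast hq0]

end GaussianBinomial

section Duality

omit [Fintype K] in
lemma tdual_eq_comap_dualAnnihilator (C : Submodule K (((i : Fin r) → Fin (n i)) → K)) :
    tdual C = C.dualAnnihilator.comap (dotProductEquiv K _).toLinearMap := by
  ext X
  simp only [Submodule.mem_comap, Submodule.mem_dualAnnihilator]
  rfl

omit [Fintype K] in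
lemma finrank_tdual_add_finrank (C : Submodule K (((i : Fin r) → Fin (n i)) → K)) :
    finrank K (tdual C) + finrank K C = ∏ i, n i := by
  rw [tdual_eq_comap_dualAnnihilator, Submodule.comap_equiv_eq_map_symm,
    LinearEquiv.finrank_map_eq, add_comm, Subspace.finrank_add_finrank_dualAnnihilator_eq,
    finrank_fintype_fun_eq_card, Fintype.card_pi]
  simp

omit [Fintype K] in
lemma tdual_sup (C A : Submodule K (((i : Fin r) → Fin (n i)) → K)) :
    tdual (C ⊔ A) = tdual C ⊓ tdual A := by
  simp only [tdual_eq_comap_dualAnnihilator, Submodule.dualAnnihilator_sup_eq,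
    Submodule.comap_inf]

omit [Fintype K] in
lemma finrank_inf_eq_finrank_tdual_inf_tdual_add
    (C A : Submodule K (((i : Fin r) → Fin (n i)) → K)) :
    (finrank K ↥(C ⊓ A) : ℤ)
      = finrank K ↥(tdual C ⊓ tdual A) + (finrank K C + finrank K A - ∏ i, (n i : ℤ)) := by
  have hdual := finrank_tdual_add_finrank (C ⊔ A)
  have hsup := Submodule.finrank_sup_add_finrank_inf_eq C A
  rw [tdual_sup] at hdual
  rw [← Nat.cast_prod, ← hdual]
  omega

end Duality

lemma qbin_finrank_inf_eq_sum (C A : Submodule K (((i : Fin r) → Fin (n i)) → K)) (j : ℕ) :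
    qbin (Fintype.card K : ℚ) (finrank K ↥(C ⊓ A) : ℤ) j
      = ∑ p ∈ range (j + 1),
          (Fintype.card K : ℚ) ^ ((p : ℤ) * (finrank K C + finrank K A - ∏ i, (n i : ℤ) - j + p))
            * qbin (Fintype.card K : ℚ) (finrank K C + finrank K A - ∏ i, (n i : ℤ)) ((j : ℤ) - p)
            * qbin (Fintype.card K : ℚ) (finrank K ↥(tdual C ⊓ tdual A) : ℤ) p := by
  rw [finrank_inf_eq_finrank_tdual_inf_tdual_add,
    qbin_natCast_add (mod_cast Fintype.one_lt_card)]

theorem macwilliams_binomial_moments_general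
    (𝒜 : Finset (Submodule K (((i : Fin r) → Fin (n i)) → K)))
    (C : Submodule K (((i : Fin r) → Fin (n i)) → K))
    (a j : ℕ) :
    ∑ A ∈ 𝒜.filter (fun A : Submodule K (((i : Fin r) → Fin (n i)) → K) => Module.finrank K ↥A = a),
        qbin (Fintype.card K : ℚ) (Module.finrank K ↥(C ⊓ A) : ℤ) (j : ℤ)
      = ∑ p ∈ Finset.range (j + 1),
          (Fintype.card K : ℚ) ^
              ((p : ℤ) * ((Module.finrank K ↥C : ℤ) + (a : ℤ)
                - ∏ i, (n i : ℤ) - (j : ℤ) + (p : ℤ)))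
            * qbin (Fintype.card K : ℚ)
                ((Module.finrank K ↥C : ℤ) + (a : ℤ) - ∏ i, (n i : ℤ)) ((j : ℤ) - (p : ℤ))
            * ∑ A ∈ 𝒜.filter (fun A : Submodule K (((i : Fin r) → Fin (n i)) → K) => Module.finrank K ↥A = a),
                qbin (Fintype.card K : ℚ)
                  (Module.finrank K ↥(tdual C ⊓ tdual A) : ℤ) (p : ℤ) := by
  simp only [mul_sum]
  rw [sum_comm]
  refine sum_congr rfl fun A hA => ?_
  rw [qbin_finrank_inf_eq_sum, (mem_filter.1 hA).2]

/-- MacWilliams identities for generalized tensor binomial moments: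
`B_a^{(j)}(C) = ∑_{p=0}^{j} q^{p(k+a−n−j+p)} [k+a−n, j−p]_q · B̄_{n−a}^{(p)}(C^⊥)`,
where `B̄_{n−a}^{(p)}(C^⊥) = ∑_{A ∈ 𝒜_a} [dim(C^⊥ ∩ A^⊥), p]_q`. -/
theorem macwilliams_binomial_moments
    (𝒜 : Finset (Submodule K (((i : Fin r) → Fin (n i)) → K)))
    (hdual : ∀ A ∈ 𝒜, tdual A ∈ 𝒜)
    (C : Submodule K (((i : Fin r) → Fin (n i)) → K))
    (a j : ℕ) (hj1 : 1 ≤ j) (hjk : j ≤ Module.finrank K ↥C) (ha : a ≤ ∏ i, n i) :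
    ∑ A ∈ 𝒜.filter (fun A : Submodule K (((i : Fin r) → Fin (n i)) → K) => Module.finrank K ↥A = a),
        qbin (Fintype.card K : ℚ) (Module.finrank K ↥(C ⊓ A) : ℤ) (j : ℤ)
      = ∑ p ∈ Finset.range (j + 1),
          (Fintype.card K : ℚ) ^
              ((p : ℤ) * ((Module.finrank K ↥C : ℤ) + (a : ℤ)
                - ∏ i, (n i : ℤ) - (j : ℤ) + (p : ℤ)))
            * qbin (Fintype.card K : ℚ)
                ((Module.finrank K ↥C : ℤ) + (a : ℤ) - ∏ i, (n i : ℤ)) ((j : ℤ) - (p : ℤ))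
            * ∑ A ∈ 𝒜.filter (fun A : Submodule K (((i : Fin r) → Fin (n i)) → K) => Module.finrank K ↥A = a),
                qbin (Fintype.card K : ℚ)
                  (Module.finrank K ↥(tdual C ⊓ tdual A) : ℤ) (p : ℤ) :=
  macwilliams_binomial_moments_general 𝒜 C a j

end TensorCodes
end
end
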